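/- arXiv:1610.06060 — 4 statements merged into one kernel-verified Lean document; each statement's English description precedes it below -/
import Mathlib

section
/- Let (G, B) be a biased graph, and let V_R ⊆ V(G) be a set of vertices such that the induced subgraph G[V_R] is connected and contains no unbalanced cycle. Let C be an unbalanced cycle of G. Then either C intersects the neighbourhood N(V_R) in at most one vertex, or there exists an unbalanced cycle C' such that: C' intersects V_R in a non-empty simple path, C' intersects N(V_R) in at most two vertices, and the vertices of C' outside V_R form a subset of the vertices of C outside V_R. -/
open SimpleGraph

/-- The open neighbourhood `N(S)` of a vertex set. -/
def nbhd {V : Type*} (G : SimpleGraph V) (S : Set V) : Set V :=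
  {v | v ∉ S ∧ ∃ u ∈ S, G.Adj u v}

/-- Three internally vertex-disjoint paths between two distinct vertices: a theta graph. -/
def IsTheta {V : Type*} (G : SimpleGraph V) {a b : V} (p1 p2 p3 : G.Walk a b) : Prop :=
  a ≠ b ∧ p1.IsPath ∧ p2.IsPath ∧ p3.IsPath ∧
  (∀ x, x ∈ p1.support → x ∈ p2.support → x = a ∨ x = b) ∧
  (∀ x, x ∈ p1.support → x ∈ p3.support → x = a ∨ x = b) ∧
  (∀ x, x ∈ p2.support → x ∈ p3.support → x = a ∨ x = b)

/-- A class of balanced cycles (given by their edge sets) is linear if whenever two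
balanced cycles form a theta graph, the third cycle of the theta is balanced. -/
def IsLinearClass {V : Type*} (G : SimpleGraph V) (Bal : Set (Sym2 V) → Prop) : Prop :=
  ∀ (a b : V) (p1 p2 p3 : G.Walk a b), IsTheta G p1 p2 p3 →
    Bal {e | e ∈ p1.edges ∨ e ∈ p2.edges} →
    Bal {e | e ∈ p1.edges ∨ e ∈ p3.edges} →
    Bal {e | e ∈ p2.edges ∨ e ∈ p3.edges}

/-- `G[A]` is balanced: every simple cycle with all vertices in `A` is balanced. -/
def BalancedOn {V : Type*} (G : SimpleGraph V) (Bal : Set (Sym2 V) → Prop) (A : Set V) : Prop :=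
  ∀ (u : V) (w : G.Walk u u), w.IsCycle → (∀ y ∈ w.support, y ∈ A) →
    Bal {e | e ∈ w.edges}

/-
Induct on the number of vertices outside `V_R` of an unbalanced cycle `D` that meets `V_R`.
Write `D` as `u a ⋯ b v` followed by a walk `τ` back to `u`, where `a ⋯ b` is a maximal subpath
inside `V_R`. If no inner vertex of `τ` lies in `V_R ∪ N(V_R)`, then `D` itself meets `V_R` in a
path and `N(V_R)` in at most `u, v`. Otherwise, a shortest path through `V_R` from an inner vertex
`z` of `τ` to the arc `a ⋯ b` is a chord of `D`. By linearity one of the two cycles formed by the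
chord and an arc of `D` is unbalanced; each arc of `D` from `z` to the arc `a ⋯ b` passes `u` or
`v`, so that cycle misses `u` or `v` and has fewer vertices outside `V_R`.
If `C` misses `V_R` but has two vertices `u ≠ v` in `N(V_R)`, a `u`–`v` path through `V_R` is a
chord of `C`, and the same linearity argument gives an unbalanced cycle meeting `V_R`.
-/

namespace SimpleGraph

variable {V : Type*} {G : SimpleGraph V}

namespace Walk

lemma IsPath.start_notMem_tail_support {u v : V} {p : G.Walk u v} (hp : p.IsPath) :
    u ∉ p.support.tail := by
  have := hp.support_nodup
  rw [← cons_tail_support] at this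
  exact (List.nodup_cons.1 this).1

lemma IsCycle.append_comm {u v : V} {p : G.Walk u v} {q : G.Walk v u}
    (h : (p.append q).IsCycle) : (q.append p).IsCycle := by
  rw [isCycle_def, isTrail_def, edges_append, tail_support_append] at h ⊢
  obtain ⟨hedges, hne, hsupp⟩ := h
  refine ⟨List.perm_append_comm.nodup_iff.1 hedges, ?_, List.perm_append_comm.nodup_iff.1 hsupp⟩
  rw [ne_eq, eq_nil_iff_nil, nil_append_iff] at hne ⊢
  tauto

lemma IsPath.isCycle_append_reverse {u v : V} {p q : G.Walk u v} (hp : p.IsPath)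
    (hq : q.IsPath) (hpq : ∀ s ∈ p.support, s ∈ q.support → s = u ∨ s = v)
    (hn : 1 < p.length ∨ 1 < q.length) : (p.append q.reverse).IsCycle := by
  refine hp.isCycle_append hq.reverse (fun s hsp hsq => ?_) (by simpa using hn)
  have hsq' : s ∈ q.support := by simpa using List.mem_of_mem_tail hsq
  rcases hpq s (List.mem_of_mem_tail hsp) hsq' with rfl | rfl
  · exact hp.start_notMem_tail_support hsp
  · exact hq.reverse.start_notMem_tail_support hsq

lemma IsCycle.isPath_append_of_ne {u v : V} {p : G.Walk u v} {q : G.Walk v u}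
    (h : (p.append q).IsCycle) (huv : u ≠ v) :
    p.IsPath ∧ q.IsPath ∧ ∀ s ∈ p.support, s ∈ q.support → s = u ∨ s = v := by
  have hp : p.IsPath := h.isPath_of_append_left (not_nil_of_ne huv.symm)
  have hq : q.IsPath := h.isPath_of_append_right (not_nil_of_ne huv)
  refine ⟨hp, hq, fun s hsp hsq => ?_⟩
  have hdisj := h.support_nodup
  rw [tail_support_append, List.nodup_append] at hdisj
  rw [← cons_tail_support] at hsp hsq
  rcases List.mem_cons.1 hsp with rfl | hsp
  · exact Or.inl rfl
  rcases List.mem_cons.1 hsq with rfl | hsq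
  · exact Or.inr rfl
  exact absurd rfl (hdisj.2.2 s hsp s hsq)

lemma IsCycle.exists_arcs {r x y : V} {D : G.Walk r r} (hD : D.IsCycle)
    (hx : x ∈ D.support) (hy : y ∈ D.support) (hxy : x ≠ y) :
    ∃ (S T : G.Walk x y), S.IsPath ∧ T.IsPath ∧
      (∀ s ∈ S.support, s ∈ T.support → s = x ∨ s = y) ∧
      (∀ s, s ∈ D.support ↔ s ∈ S.support ∨ s ∈ T.support) ∧
      (∀ e, e ∈ D.edges ↔ e ∈ S.edges ∨ e ∈ T.edges) := by
  classical
  set R := D.rotate x hx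
  have hyR : y ∈ R.support := (mem_support_rotate_iff D x hx).2 hy
  have hR : ((R.takeUntil y hyR).append (R.dropUntil y hyR)).IsCycle := by
    rw [take_spec]; exact hD.rotate hx
  obtain ⟨hS, hT, hST⟩ := hR.isPath_append_of_ne hxy
  refine ⟨R.takeUntil y hyR, (R.dropUntil y hyR).reverse, hS, hT.reverse,
    fun s hs ht => hST s hs (by simpa using ht), fun s => ?_, fun e => ?_⟩
  · rw [← mem_support_rotate_iff D x hx]
    change s ∈ R.support ↔ _
    conv_lhs => rw [← take_spec R hyR]
    simp only [mem_support_append_iff, support_reverse, List.mem_reverse]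
  · rw [← (rotate_edges D x hx).perm.mem_iff]
    change e ∈ R.edges ↔ _
    conv_lhs => rw [← take_spec R hyR]
    simp only [edges_append, List.mem_append, edges_reverse, List.mem_reverse]

lemma exists_isPath_between_sets {A B X : Set V} {s t : V} (p : G.Walk s t) (hs : s ∈ A)
    (ht : t ∈ B) (hp : ∀ y ∈ p.support, y ∈ X) :
    ∃ (s' t' : V) (q : G.Walk s' t'), q.IsPath ∧ s' ∈ A ∧ t' ∈ B ∧
      (∀ y ∈ q.support, y ∈ X) ∧ (∀ y ∈ q.support, y ∈ A → y = s') ∧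
      (∀ y ∈ q.support, y ∈ B → y = t') := by
  classical
  have hex : ∃ n, ∃ (s' t' : V) (q : G.Walk s' t'), q.length = n ∧ s' ∈ A ∧ t' ∈ B ∧
      ∀ y ∈ q.support, y ∈ X := ⟨_, s, t, p, rfl, hs, ht, hp⟩
  obtain ⟨s', t', q, hlen, hs', ht', hq⟩ := Nat.find_spec hex
  refine ⟨s', t', q.bypass, q.bypass_isPath, hs', ht',
    fun y hy => hq y (q.support_bypass_subset_support hy), fun y hy hyA => ?_, fun y hy hyB => ?_⟩
  -- a shortest `A`–`B` walk inside `X` meets `A` and `B` only at its ends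
  all_goals
    have hy' := q.support_bypass_subset_support hy
    by_contra hne
  · exact Nat.find_min hex (hlen ▸ length_dropUntil_lt_length hy' hne) ⟨y, t', q.dropUntil y hy',
      rfl, hyA, ht', fun z hz => hq z (q.support_dropUntil_subset_support _ hz)⟩
  · exact Nat.find_min hex (hlen ▸ length_takeUntil_lt_length hy' hne) ⟨s', y, q.takeUntil y hy',
      rfl, hs', hyB, fun z hz => hq z (q.support_takeUntil_subset_support _ hz)⟩

lemma exists_eq_append_cons_of_notMem (A : Set V) :
    ∀ {a t : V} (p : G.Walk a t), a ∈ A → t ∉ A →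
      ∃ (b v : V) (W : G.Walk a b) (hbv : G.Adj b v) (w : G.Walk v t),
        p = W.append (cons hbv w) ∧ (∀ y ∈ W.support, y ∈ A) ∧ v ∉ A
  | _, _, nil, ha, ht => absurd ha ht
  | a, _, cons (v := b) h q, ha, ht => by
    by_cases hb : b ∈ A
    · obtain ⟨b', v, W, hbv, w, rfl, hW, hv⟩ := exists_eq_append_cons_of_notMem A q hb ht
      refine ⟨b', v, cons h W, hbv, w, rfl, fun y hy => ?_, hv⟩
      rcases List.mem_cons.1 hy with rfl | hy
      exacts [ha, hW y hy]
    · exact ⟨a, b, nil, h, q, rfl, by simpa using ha, hb⟩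

lemma exists_eq_append_cons_append_cons (A : Set V) :
    ∀ {s t : V} (p : G.Walk s t), s ∉ A → t ∉ A → (∃ y ∈ p.support, y ∈ A) →
      ∃ (u a b v : V) (w₁ : G.Walk s u) (hua : G.Adj u a) (W : G.Walk a b) (hbv : G.Adj b v)
        (w₂ : G.Walk v t), p = w₁.append (cons hua (W.append (cons hbv w₂))) ∧
        u ∉ A ∧ (∀ y ∈ W.support, y ∈ A) ∧ v ∉ A
  | _, _, nil, hs, _, ⟨y, hy, hyA⟩ => by
    rw [support_nil, List.mem_singleton] at hy
    exact absurd (hy ▸ hyA) hs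
  | s, _, cons (v := a) h q, hs, ht, ⟨y, hy, hyA⟩ => by
    by_cases ha : a ∈ A
    · obtain ⟨b, v, W, hbv, w₂, rfl, hW, hv⟩ := exists_eq_append_cons_of_notMem A q ha ht
      exact ⟨s, a, b, v, nil, h, W, hbv, w₂, rfl, hs, hW, hv⟩
    · have hq : ∃ y ∈ q.support, y ∈ A := by
        rcases List.mem_cons.1 hy with rfl | hy
        exacts [absurd hyA hs, ⟨y, hy, hyA⟩]
      obtain ⟨u, a', b, v, w₁, hua, W, hbv, w₂, rfl, hu, hW, hv⟩ :=
        exists_eq_append_cons_append_cons A q ha ht hq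
      exact ⟨u, a', b, v, cons h w₁, hua, W, hbv, w₂, rfl, hu, hW, hv⟩

lemma IsCycle.exists_eq_cons_concat_append {A : Set V} {r o : V} {D : G.Walk r r}
    (hD : D.IsCycle) (ho : o ∈ D.support) (hoA : o ∉ A) (hmeet : ∃ y ∈ D.support, y ∈ A) :
    ∃ (u a b v : V) (hua : G.Adj u a) (W : G.Walk a b) (hbv : G.Adj b v) (τ : G.Walk v u),
      ((cons hua (W.concat hbv)).append τ).IsCycle ∧
      (∀ y, y ∈ ((cons hua (W.concat hbv)).append τ).support ↔ y ∈ D.support) ∧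
      (∀ e, e ∈ ((cons hua (W.concat hbv)).append τ).edges ↔ e ∈ D.edges) ∧
      u ∉ A ∧ (∀ y ∈ W.support, y ∈ A) ∧ v ∉ A := by
  classical
  obtain ⟨y, hy, hyA⟩ := hmeet
  obtain ⟨u, a, b, v, w₁, hua, W, hbv, w₂, hrot, hu, hW, hv⟩ :=
    exists_eq_append_cons_append_cons A (D.rotate o ho) hoA hoA
      ⟨y, (mem_support_rotate_iff D o ho).2 hy, hyA⟩
  have hD₁ : (cons hua (W.concat hbv)).append (w₂.append w₁) =
      (cons hua (W.append (cons hbv w₂))).append w₁ := by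
    rw [← concat_append, ← cons_append, append_assoc]
  refine ⟨u, a, b, v, hua, W, hbv, w₂.append w₁, ?_, fun y => ?_, fun e => ?_, hu, hW, hv⟩
  · rw [hD₁]
    exact IsCycle.append_comm (hrot ▸ hD.rotate ho)
  · rw [hD₁, ← mem_support_rotate_iff D o ho, hrot, mem_support_append_iff,
      mem_support_append_iff, or_comm]
  · rw [hD₁, ← (rotate_edges D o ho).perm.mem_iff, hrot, edges_append, edges_append,
      List.mem_append, List.mem_append, or_comm]

lemma exists_mem_support_of_edges_subset_append {u v : V} {p : G.Walk u v} {q : G.Walk v u} :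
    ∀ {z x : V} (S : G.Walk z x), z ∉ p.support → x ∈ p.support →
      (∀ e ∈ S.edges, e ∈ p.edges ∨ e ∈ q.edges) →
      ∃ y ∈ S.support, y ∈ p.support ∧ y ∈ q.support
  | _, _, nil, hz, hx, _ => absurd hx hz
  | z, _, cons (v := w) h S, hz, hx, hS => by
    by_cases hw : w ∈ p.support
    · have hzw : s(z, w) ∈ q.edges :=
        (hS _ (by simp)).resolve_left fun he => hz (p.fst_mem_support_of_mem_edges he)
      exact ⟨w, by simp, hw, q.snd_mem_support_of_mem_edges hzw⟩
    · obtain ⟨y, hy, hyp, hyq⟩ := exists_mem_support_of_edges_subset_append S hw hx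
        fun e he => hS e (by simp [he])
      exact ⟨y, by simp [hy], hyp, hyq⟩

lemma one_lt_length_of_mem_support {u v w : V} (p : G.Walk u v) (hw : w ∈ p.support)
    (hwu : w ≠ u) (hwv : w ≠ v) : 1 < p.length := by
  rcases p with _ | ⟨_, _ | ⟨_, _⟩⟩
  · exact absurd (by simpa using hw) hwu
  · simp_all
  · simp

end Walk

open Walk

lemma exists_walk_of_induce_connected {A : Set V}
    (hA : (G.induce A).Connected) {a b : V} (ha : a ∈ A) (hb : b ∈ A) :
    ∃ w : G.Walk a b, ∀ y ∈ w.support, y ∈ A := by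
  have hmap : ∀ {x y : A} (w : (G.induce A).Walk x y),
      ∀ z ∈ (w.map (Embedding.induce A).toHom).support, z ∈ A := by
    intro x y w z hz
    rw [Walk.support_map, List.mem_map] at hz
    obtain ⟨⟨z, hz⟩, -, rfl⟩ := hz
    exact hz
  obtain ⟨w⟩ := hA.preconnected ⟨a, ha⟩ ⟨b, hb⟩
  exact ⟨_, hmap w⟩

lemma exists_walk_of_mem_or_mem_nbhd {A : Set V}
    (hA : (G.induce A).Connected) {z a : V} (hz : z ∈ A ∨ z ∈ nbhd G A) (ha : a ∈ A) :
    ∃ w : G.Walk z a, ∀ y ∈ w.support, y = z ∨ y ∈ A := by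
  rcases hz with hz | ⟨-, b, hb, hbz⟩
  · obtain ⟨w, hw⟩ := exists_walk_of_induce_connected hA hz ha
    exact ⟨w, fun y hy => .inr (hw y hy)⟩
  · obtain ⟨w, hw⟩ := exists_walk_of_induce_connected hA hb ha
    refine ⟨cons hbz.symm w, fun y hy => ?_⟩
    rcases List.mem_cons.1 hy with rfl | hy
    exacts [.inl rfl, .inr (hw y hy)]

lemma exists_isPath_through_of_induce_connected {A : Set V}
    (hA : (G.induce A).Connected) {u v a b : V} (hu : u ∉ A) (hv : v ∉ A) (huv : u ≠ v)
    (hua : G.Adj u a) (hbv : G.Adj b v) (ha : a ∈ A) (hb : b ∈ A) :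
    ∃ R : G.Walk u v, R.IsPath ∧ 1 < R.length ∧ a ∈ R.support ∧
      ∀ y ∈ R.support, y = u ∨ y = v ∨ y ∈ A := by
  classical
  obtain ⟨w, hw⟩ := exists_walk_of_induce_connected hA ha hb
  have hw' : ∀ y ∈ w.bypass.support, y ∈ A := fun y hy => hw y (w.support_bypass_subset_support hy)
  have hsupp : ∀ y ∈ (cons hua (w.bypass.concat hbv)).support, y = u ∨ y = v ∨ y ∈ A := by
    simp only [support_cons, support_concat, List.mem_cons, List.mem_append, List.mem_nil_iff,
      or_false]
    rintro y (rfl | hy | rfl)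
    exacts [.inl rfl, .inr (.inr (hw' y hy)), .inr (.inl rfl)]
  refine ⟨cons hua (w.bypass.concat hbv), ?_, by simp, by simp, hsupp⟩
  refine (w.bypass_isPath.concat (fun h => hv (hw' v h)) hbv).cons fun h => ?_
  rw [support_concat, List.mem_append, List.mem_singleton] at h
  exact h.elim (fun h => hu (hw' u h)) huv

lemma exists_chord_of_cons_concat_append {A : Set V} (hA : (G.induce A).Connected)
    {u a b v z₀ : V} {hua : G.Adj u a} {W : G.Walk a b} {hbv : G.Adj b v} {τ : G.Walk v u}
    (hW : ∀ y ∈ W.support, y ∈ A) (hu : u ∉ A) (hv : v ∉ A)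
    (hz₀ : z₀ ∈ τ.support) (hz₀u : z₀ ≠ u) (hz₀v : z₀ ≠ v) (hz₀A : z₀ ∈ A ∨ z₀ ∈ nbhd G A) :
    ∃ (z x : V) (R : G.Walk z x), R.IsPath ∧ z ∈ τ.support ∧ z ≠ u ∧ z ≠ v ∧ x ∈ W.support ∧
      (∀ s ∈ R.support, s = z ∨ s ∈ A) ∧
      ∀ s ∈ R.support, s ∈ ((cons hua (W.concat hbv)).append τ).support → s = z ∨ s = x := by
  obtain ⟨w, hw⟩ := exists_walk_of_mem_or_mem_nbhd hA hz₀A (hW a W.start_mem_support)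
  obtain ⟨z, x, R, hR, ⟨hz, hzu, hzv⟩, hx, hRX, hRτ, hRW⟩ :=
    exists_isPath_between_sets (A := {y | y ∈ τ.support ∧ y ≠ u ∧ y ≠ v})
      (B := {y | y ∈ W.support}) (X := {y | (y ∈ τ.support ∧ y ≠ u ∧ y ≠ v) ∨ y ∈ A})
      w ⟨hz₀, hz₀u, hz₀v⟩ W.start_mem_support
      fun y hy => (hw y hy).imp_left (by rintro rfl; exact ⟨hz₀, hz₀u, hz₀v⟩)
  have hRA : ∀ s ∈ R.support, s = z ∨ s ∈ A := fun s hs => (hRX s hs).imp_left (hRτ s hs)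
  refine ⟨z, x, R, hR, hz, hzu, hzv, hx, hRA, fun s hs hsD => ?_⟩
  rcases hRA s hs with h | hsA
  · exact .inl h
  simp only [mem_support_append_iff, support_cons, support_concat, List.mem_cons,
    List.mem_append, List.mem_nil_iff, or_false] at hsD
  rcases hsD with (rfl | hsW | rfl) | hsτ
  · exact absurd hsA hu
  · exact .inr (hRW s hs hsW)
  · exact absurd hsA hv
  · exact .inl (hRτ s hs ⟨hsτ, fun h => hu (h ▸ hsA), fun h => hv (h ▸ hsA)⟩)

def Walk.IsTidy (A : Set V) {c : V} (C : G.Walk c c) : Prop :=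
  (∃ (s t : V) (p : G.Walk s t), p.IsPath ∧ (∀ y ∈ p.support, y ∈ A) ∧
    ∀ y : V, (y ∈ C.support ∧ y ∈ A) ↔ y ∈ p.support) ∧
  ∃ u v : V, {y | y ∈ C.support ∧ y ∈ nbhd G A} ⊆ {u, v}

lemma Walk.isTidy_cons_concat_append {A : Set V} {u a b v : V} {hua : G.Adj u a} {W : G.Walk a b}
    {hbv : G.Adj b v} {τ : G.Walk v u} (hD : ((cons hua (W.concat hbv)).append τ).IsCycle)
    (hW : ∀ y ∈ W.support, y ∈ A) (hu : u ∉ A) (hv : v ∉ A)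
    (hτ : ∀ y ∈ τ.support, y = u ∨ y = v ∨ (y ∉ A ∧ y ∉ nbhd G A)) :
    ((cons hua (W.concat hbv)).append τ).IsTidy A := by
  have hmem : ∀ y, y ∈ ((cons hua (W.concat hbv)).append τ).support ↔
      y = u ∨ y ∈ W.support ∨ y = v ∨ y ∈ τ.support := by
    intro y
    simp only [mem_support_append_iff, support_cons, support_concat, List.mem_cons,
      List.mem_append, List.mem_nil_iff, or_false, or_assoc]
  have hWpath : W.IsPath := by
    have h := hD.support_nodup
    rw [tail_support_append, support_cons, List.tail_cons, support_concat] at h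
    exact isPath_def _ |>.2 (List.nodup_append.1 (List.nodup_append.1 h).1).1
  refine ⟨⟨a, b, W, hWpath, hW, fun y => ⟨?_, fun hy => ⟨(hmem y).2 (.inr (.inl hy)), hW y hy⟩⟩⟩,
    u, v, ?_⟩
  · rintro ⟨hy, hyA⟩
    rcases (hmem y).1 hy with rfl | hy | rfl | hy
    · exact absurd hyA hu
    · exact hy
    · exact absurd hyA hv
    · rcases hτ y hy with rfl | rfl | ⟨hyA', -⟩
      exacts [absurd hyA hu, absurd hyA hv, absurd hyA hyA']
  · rintro y ⟨hy, hyN⟩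
    rcases (hmem y).1 hy with rfl | hy | rfl | hy
    · exact .inl rfl
    · exact absurd (hW y hy) hyN.1
    · exact .inr rfl
    · rcases hτ y hy with rfl | rfl | ⟨-, hyN'⟩
      exacts [.inl rfl, .inr rfl, absurd hyN hyN']

end SimpleGraph

open SimpleGraph Walk

section BiasedGraph

variable {V : Type*} {G : SimpleGraph V} {Bal : Set (Sym2 V) → Prop}

lemma IsLinearClass.exists_unbalanced_arc (hlin : IsLinearClass G Bal)
    {r x y : V} {D : G.Walk r r} (hD : D.IsCycle) (hunb : ¬ Bal {e | e ∈ D.edges})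
    (hx : x ∈ D.support) (hy : y ∈ D.support) (hxy : x ≠ y) {R : G.Walk x y} (hR : R.IsPath)
    (hRD : ∀ s ∈ R.support, s ∈ D.support → s = x ∨ s = y) :
    ∃ (S T : G.Walk x y), S.IsPath ∧ T.IsPath ∧
      (∀ s ∈ S.support, s ∈ T.support → s = x ∨ s = y) ∧
      (∀ s, s ∈ D.support ↔ s ∈ S.support ∨ s ∈ T.support) ∧
      (∀ e, e ∈ D.edges ↔ e ∈ S.edges ∨ e ∈ T.edges) ∧
      ¬ Bal {e | e ∈ R.edges ∨ e ∈ S.edges} := by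
  obtain ⟨S, T, hS, hT, hST, hsupp, hedges⟩ := hD.exists_arcs hx hy hxy
  by_cases hRS : Bal {e | e ∈ R.edges ∨ e ∈ S.edges}
  · have hθ : IsTheta G R S T :=
      ⟨hxy, hR, hS, hT, fun s hsR hsS => hRD s hsR ((hsupp s).2 (.inl hsS)),
        fun s hsR hsT => hRD s hsR ((hsupp s).2 (.inr hsT)), hST⟩
    refine ⟨T, S, hT, hS, fun s hsT hsS => hST s hsS hsT, fun s => (hsupp s).trans or_comm,
      fun e => (hedges e).trans or_comm, fun hRT => hunb ?_⟩
    rw [show {e | e ∈ D.edges} = {e | e ∈ S.edges ∨ e ∈ T.edges} from Set.ext hedges]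
    exact hlin x y R S T hθ hRS hRT
  · exact ⟨S, T, hS, hT, hST, hsupp, hedges, hRS⟩

lemma IsLinearClass.exists_unbalanced_cycle_avoiding
    (hlin : IsLinearClass G Bal) {u v z x : V} {p : G.Walk u v} {τ : G.Walk v u}
    (hD : (p.append τ).IsCycle) (hunb : ¬ Bal {e | e ∈ (p.append τ).edges}) (huv : u ≠ v)
    (hz : z ∈ τ.support) (hzu : z ≠ u) (hzv : z ≠ v)
    (hx : x ∈ p.support) (hxu : x ≠ u) (hxv : x ≠ v) {R : G.Walk z x} (hR : R.IsPath)
    (hRD : ∀ s ∈ R.support, s ∈ (p.append τ).support → s = z ∨ s = x) :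
    ∃ (S : G.Walk z x) (μ : V), (∀ s ∈ S.support, s ∈ (p.append τ).support) ∧
      (R.append S.reverse).IsCycle ∧ ¬ Bal {e | e ∈ (R.append S.reverse).edges} ∧
      (μ = u ∨ μ = v) ∧ μ ∉ S.support := by
  obtain ⟨-, -, hpτ⟩ := hD.isPath_append_of_ne huv
  have hzp : z ∉ p.support := fun h => (hpτ z h hz).elim hzu hzv
  obtain ⟨S, T, hS, -, hST, hsupp, hedges, hRS⟩ := hlin.exists_unbalanced_arc hD hunb
    ((mem_support_append_iff _ _).2 (.inr hz)) ((mem_support_append_iff _ _).2 (.inl hx))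
    (fun h => hzp (h ▸ hx)) hR hRD
  -- an arc from `z ∉ p` to `x ∈ p` along the cycle must cross from `τ` into `p` at `u` or `v`
  have hcross : ∀ Q : G.Walk z x, (∀ e ∈ Q.edges, e ∈ (p.append τ).edges) →
      ∃ μ ∈ Q.support, μ = u ∨ μ = v := by
    intro Q hQ
    obtain ⟨μ, hμ, hμp, hμτ⟩ := exists_mem_support_of_edges_subset_append Q hzp hx
      fun e he => by simpa only [edges_append, List.mem_append] using hQ e he
    exact ⟨μ, hμ, hpτ μ hμp hμτ⟩
  have hne : ∀ μ, μ = u ∨ μ = v → μ ≠ z ∧ μ ≠ x := by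
    rintro μ (rfl | rfl)
    exacts [⟨Ne.symm hzu, Ne.symm hxu⟩, ⟨Ne.symm hzv, Ne.symm hxv⟩]
  obtain ⟨μS, hμS, hμSuv⟩ := hcross S fun e he => (hedges e).2 (.inl he)
  obtain ⟨μ, hμ, hμuv⟩ := hcross T fun e he => (hedges e).2 (.inr he)
  refine ⟨S, μ, fun s hs => (hsupp s).2 (.inl hs), ?_, ?_, hμuv, fun h => ?_⟩
  · exact hR.isCycle_append_reverse hS (fun s hsR hsS => hRD s hsR ((hsupp s).2 (.inl hsS)))
      (.inr (S.one_lt_length_of_mem_support hμS (hne μS hμSuv).1 (hne μS hμSuv).2))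
  · simpa only [edges_append, edges_reverse, List.mem_append, List.mem_reverse] using hRS
  · rcases hST μ h hμ with h | h
    exacts [(hne μ hμuv).1 h, (hne μ hμuv).2 h]

lemma IsLinearClass.exists_unbalanced_cycle_meeting (hlin : IsLinearClass G Bal) {A : Set V}
    (hA : (G.induce A).Connected) {c : V} {C : G.Walk c c} (hC : C.IsCycle)
    (hCunb : ¬ Bal {e | e ∈ C.edges})
    (hnbhd : ¬ ({y | y ∈ C.support ∧ y ∈ nbhd G A} : Set V).Subsingleton) :
    ∃ (r : V) (D : G.Walk r r), D.IsCycle ∧ ¬ Bal {e | e ∈ D.edges} ∧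
      (∃ y ∈ D.support, y ∈ A) ∧ {y | y ∈ D.support ∧ y ∉ A} ⊆ {y | y ∈ C.support ∧ y ∉ A} := by
  by_cases hmeet : ∃ y ∈ C.support, y ∈ A
  · exact ⟨c, C, hC, hCunb, hmeet, subset_rfl⟩
  push Not at hmeet
  obtain ⟨u, ⟨huC, hu, a, ha, hau⟩, v, ⟨hvC, hv, b, hb, hbv⟩, huv⟩ :=
    Set.not_subsingleton_iff.1 hnbhd
  obtain ⟨R, hR, hRlen, haR, hRsupp⟩ :=
    exists_isPath_through_of_induce_connected hA hu hv huv hau.symm hbv ha hb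
  have hRC : ∀ s ∈ R.support, s ∈ C.support → s = u ∨ s = v := fun s hsR hsC =>
    (hRsupp s hsR).imp_right (Or.resolve_right · (hmeet s hsC))
  obtain ⟨S, _, hS, -, -, hsupp, -, hRS⟩ := hlin.exists_unbalanced_arc hC hCunb huC hvC huv hR hRC
  refine ⟨u, R.append S.reverse, hR.isCycle_append_reverse hS
    (fun s hsR hsS => hRC s hsR ((hsupp s).2 (.inl hsS))) (.inl hRlen), ?_,
    ⟨a, by simp [haR], ha⟩, ?_⟩
  · simpa only [edges_append, edges_reverse, List.mem_append, List.mem_reverse] using hRS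
  · rintro y ⟨hy, hyA⟩
    rw [mem_support_append_iff, support_reverse, List.mem_reverse] at hy
    refine ⟨?_, hyA⟩
    rcases hy with hy | hy
    · rcases hRsupp y hy with rfl | rfl | h
      exacts [huC, hvC, absurd h hyA]
    · exact (hsupp y).2 (.inl hy)

lemma IsLinearClass.exists_smaller_of_mem_or_mem_nbhd (hlin : IsLinearClass G Bal)
    {A : Set V} (hA : (G.induce A).Connected) {u a b v z₀ : V} {hua : G.Adj u a}
    {W : G.Walk a b} {hbv : G.Adj b v} {τ : G.Walk v u}
    (hD : ((cons hua (W.concat hbv)).append τ).IsCycle)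
    (hunb : ¬ Bal {e | e ∈ ((cons hua (W.concat hbv)).append τ).edges})
    (hW : ∀ y ∈ W.support, y ∈ A) (hu : u ∉ A) (hv : v ∉ A)
    (hz₀ : z₀ ∈ τ.support) (hz₀u : z₀ ≠ u) (hz₀v : z₀ ≠ v) (hz₀A : z₀ ∈ A ∨ z₀ ∈ nbhd G A) :
    ∃ (c : V) (E : G.Walk c c), E.IsCycle ∧ ¬ Bal {e | e ∈ E.edges} ∧
      (∃ y ∈ E.support, y ∈ A) ∧ {y | y ∈ E.support ∧ y ∉ A} ⊆
        {y | y ∈ ((cons hua (W.concat hbv)).append τ).support ∧ y ∉ A} ∧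
      ∃ μ ∈ ((cons hua (W.concat hbv)).append τ).support, μ ∉ A ∧ μ ∉ E.support := by
  have huv : u ≠ v := by
    rintro rfl
    have hτ : τ.Nil := isPath_iff_nil.1 (hD.isPath_of_append_right not_nil_cons)
    rw [eq_nil_iff_nil.2 hτ, support_nil, List.mem_singleton] at hz₀
    exact hz₀u hz₀
  obtain ⟨z, x, R, hR, hz, hzu, hzv, hx, hRA, hRD⟩ :=
    exists_chord_of_cons_concat_append hA hW hu hv hz₀ hz₀u hz₀v hz₀A
  obtain ⟨S, μ, hSD, hE, hEunb, hμuv, hμS⟩ := hlin.exists_unbalanced_cycle_avoiding hD hunb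
    huv hz hzu hzv (by simp [support_concat, hx]) (fun h => hu (h ▸ hW x hx))
    (fun h => hv (h ▸ hW x hx)) hR hRD
  have hμA : μ ∉ A := by rcases hμuv with rfl | rfl <;> assumption
  have hzD : z ∈ ((cons hua (W.concat hbv)).append τ).support :=
    (mem_support_append_iff _ _).2 (.inr hz)
  refine ⟨z, R.append S.reverse, hE, hEunb, ⟨x, by simp, hW x hx⟩, ?_, μ,
    by rcases hμuv with rfl | rfl <;> simp, hμA, ?_⟩
  · rintro y ⟨hy, hyA⟩
    rw [mem_support_append_iff, support_reverse, List.mem_reverse] at hy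
    refine ⟨?_, hyA⟩
    rcases hy with hy | hy
    · exact (hRA y hy).elim (· ▸ hzD) (absurd · hyA)
    · exact hSD y hy
  · rw [mem_support_append_iff, support_reverse, List.mem_reverse]
    rintro (h | h)
    · rcases hRA μ h with rfl | h
      exacts [hμuv.elim hzu hzv, hμA h]
    · exact hμS h

lemma IsLinearClass.exists_isTidy_or_exists_smaller (hlin : IsLinearClass G Bal) {A : Set V}
    (hA : (G.induce A).Connected) (hbal : BalancedOn G Bal A) {r : V} {D : G.Walk r r}
    (hD : D.IsCycle) (hunb : ¬ Bal {e | e ∈ D.edges}) (hmeet : ∃ y ∈ D.support, y ∈ A) :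
    (∃ (c : V) (C : G.Walk c c), C.IsCycle ∧ ¬ Bal {e | e ∈ C.edges} ∧ C.IsTidy A ∧
      {y | y ∈ C.support ∧ y ∉ A} ⊆ {y | y ∈ D.support ∧ y ∉ A}) ∨
    ∃ (c : V) (E : G.Walk c c), E.IsCycle ∧ ¬ Bal {e | e ∈ E.edges} ∧
      (∃ y ∈ E.support, y ∈ A) ∧ {y | y ∈ E.support ∧ y ∉ A} ⊆ {y | y ∈ D.support ∧ y ∉ A} ∧
      ∃ μ ∈ D.support, μ ∉ A ∧ μ ∉ E.support := by
  obtain ⟨o, ho, hoA⟩ : ∃ o ∈ D.support, o ∉ A := by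
    by_contra! h
    exact hunb (hbal r D hD h)
  obtain ⟨u, a, b, v, hua, W, hbv, τ, hD₁, hsupp, hedges, hu, hW, hv⟩ :=
    hD.exists_eq_cons_concat_append ho hoA hmeet
  have hunb₁ : ¬ Bal {e | e ∈ ((cons hua (W.concat hbv)).append τ).edges} := by
    rwa [show {e | e ∈ ((cons hua (W.concat hbv)).append τ).edges} = {e | e ∈ D.edges} from
      Set.ext hedges]
  have hout : {y | y ∈ ((cons hua (W.concat hbv)).append τ).support ∧ y ∉ A} ⊆
      {y | y ∈ D.support ∧ y ∉ A} := fun y hy => ⟨(hsupp y).1 hy.1, hy.2⟩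
  by_cases hclean : ∀ y ∈ τ.support, y = u ∨ y = v ∨ (y ∉ A ∧ y ∉ nbhd G A)
  · exact .inl ⟨u, _, hD₁, hunb₁, isTidy_cons_concat_append hD₁ hW hu hv hclean, hout⟩
  push Not at hclean
  obtain ⟨z₀, hz₀, hz₀u, hz₀v, hz₀A⟩ := hclean
  obtain ⟨c, E, hE, hEunb, hEmeet, hsub, μ, hμ, hμA, hμE⟩ :=
    hlin.exists_smaller_of_mem_or_mem_nbhd hA hD₁ hunb₁ hW hu hv hz₀ hz₀u hz₀v
      ((em (z₀ ∈ A)).imp_right hz₀A)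
  exact .inr ⟨c, E, hE, hEunb, hEmeet, hsub.trans hout, μ, (hsupp μ).1 hμ, hμA, hμE⟩

theorem IsLinearClass.exists_isTidy_unbalanced_cycle (hlin : IsLinearClass G Bal) {A : Set V}
    (hA : (G.induce A).Connected) (hbal : BalancedOn G Bal A) {r : V} {D : G.Walk r r}
    (hD : D.IsCycle) (hunb : ¬ Bal {e | e ∈ D.edges}) (hmeet : ∃ y ∈ D.support, y ∈ A) :
    ∃ (c : V) (C : G.Walk c c), C.IsCycle ∧ ¬ Bal {e | e ∈ C.edges} ∧ C.IsTidy A ∧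
      {y | y ∈ C.support ∧ y ∉ A} ⊆ {y | y ∈ D.support ∧ y ∉ A} := by
  induction hn : {y | y ∈ D.support ∧ y ∉ A}.ncard using Nat.strong_induction_on
    generalizing r D with
  | _ n ih =>
  rcases hlin.exists_isTidy_or_exists_smaller hA hbal hD hunb hmeet with
    h | ⟨c, E, hE, hEunb, hEmeet, hsub, μ, hμD, hμA, hμE⟩
  · exact h
  have hlt : {y | y ∈ E.support ∧ y ∉ A}.ncard < n := by
    refine hn ▸ Set.ncard_lt_ncard ((Set.ssubset_iff_of_subset hsub).2 ⟨μ, ⟨hμD, hμA⟩, ?_⟩)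
      (D.support.finite_toSet.subset fun y hy => hy.1)
    exact fun h => hμE h.1
  obtain ⟨c', C, hC, hCunb, hCtidy, hCsub⟩ := ih _ hlt hE hEunb hEmeet rfl
  exact ⟨c', C, hC, hCunb, hCtidy, hCsub.trans hsub⟩

end BiasedGraph

/-- Lemma 1: given a balanced connected region `VR` and an
unbalanced cycle `C`, either `C` meets `N(VR)` in at most one vertex, or some
unbalanced cycle `C'` meets `VR` in a nonempty simple path, meets `N(VR)` in at
most two vertices, and has its vertices outside `VR` among those of `C`. -/
theorem stmt3 {V : Type*} (G : SimpleGraph V) (Bal : Set (Sym2 V) → Prop)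
    (hlin : IsLinearClass G Bal) (VR : Set V)
    (hconn : (G.induce VR).Connected)
    (hbal : BalancedOn G Bal VR)
    {c : V} (C : G.Walk c c) (hC : C.IsCycle)
    (hCunb : ¬ Bal {e | e ∈ C.edges}) :
    ({y | y ∈ C.support ∧ y ∈ nbhd G VR} : Set V).Subsingleton ∨
    ∃ (c' : V) (C' : G.Walk c' c'), C'.IsCycle ∧ ¬ Bal {e | e ∈ C'.edges} ∧
      (∃ (s t : V) (p : G.Walk s t), p.IsPath ∧
        (∀ y ∈ p.support, y ∈ VR) ∧
        (∀ y : V, (y ∈ C'.support ∧ y ∈ VR) ↔ y ∈ p.support)) ∧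
      (∃ u v : V, {y | y ∈ C'.support ∧ y ∈ nbhd G VR} ⊆ {u, v}) ∧
      {y | y ∈ C'.support ∧ y ∉ VR} ⊆ {y | y ∈ C.support ∧ y ∉ VR} := by
  refine or_iff_not_imp_left.2 fun hnbhd => ?_
  obtain ⟨r, D, hD, hDunb, hDmeet, hDsub⟩ :=
    hlin.exists_unbalanced_cycle_meeting hconn hC hCunb hnbhd
  obtain ⟨c', C', hC', hC'unb, ⟨hpath, hpair⟩, hsub⟩ :=
    hlin.exists_isTidy_unbalanced_cycle hconn hbal hD hDunb hDmeet
  exact ⟨c', C', hC', hC'unb, hpath, hpair, hsub.trans hDsub⟩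
end

section
/- Let (G, B) be a biased graph with root v₀ and x : V → [0,1] with x_{v₀}=0. Under the edge-length metric ℓ_x(uv) = (x_u + x_v)/2, any minimum-weight v₀-balloon B' = (P, C) satisfies w(B') ≥ ℓ_x(C) + 2·min_{v ∈ V(C)} z_x(v), where z_x(v) is the ℓ_x-distance from v₀ to v in G, with equality when B' has minimum weight among all v₀-balloons; in particular the knot vertex of a minimum-weight balloon minimizes z_x over V(C), and the attachment path P is a shortest path. -/
/-!
Since `x v₀ = 0`, the weight of a balloon `(P, C)` is `2 ℓ_x(P) + ℓ_x(C)`, and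
`ℓ_x(P) ≥ z_x(t) ≥ min_C z_x` gives the inequality. For a minimum-weight balloon, any walk from
`v₀` to a vertex of `C` shortcuts, without getting longer, to a path `P'` that meets `C` only at
its end `v'`; `P'` together with `C` rotated to start at `v'` is again a balloon, so minimality
gives `ℓ_x(P) ≤ ℓ_x(P')`. Hence `ℓ_x(P) ≤ min_C z_x`, and all the inequalities are equalities.
-/

open SimpleGraph

/-- Length of a walk under the metric `ℓ_x(uv) = (x_u + x_v)/2`. -/
noncomputable def walkLen {V : Type*} {G : SimpleGraph V} (x : V → ℝ) {u v : V} (w : G.Walk u v) : ℝ :=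
  (w.darts.map fun d => (x d.toProd.1 + x d.toProd.2) / 2).sum

/-- A `v₀`-balloon: an unbalanced simple cycle `C` through the knot vertex `t`,
together with a simple path `P` from `v₀` to `t` internally disjoint from `C`. -/
def IsBalloon {V : Type*} (G : SimpleGraph V) (Bal : Set (Sym2 V) → Prop)
    (v0 t : V) (P : G.Walk v0 t) (C : G.Walk t t) : Prop :=
  P.IsPath ∧ C.IsCycle ∧ ¬ Bal {e | e ∈ C.edges} ∧
  ∀ y, y ∈ P.support → y ∈ C.support → y = t

/-- Balloon weight `w(B) = 2 w(P) + w(C)`: coefficient 2 on path vertices (knot counted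
`2·(1/2)+1 = 2` overall), coefficient 1 on the other cycle vertices. -/
noncomputable def balloonWeight {V : Type*} {G : SimpleGraph V} {v0 t : V} (x : V → ℝ)
    (P : G.Walk v0 t) (C : G.Walk t t) : ℝ :=
  2 * ((P.support.map x).sum - x t / 2) + (C.support.tail.map x).sum

/-- Shortest-path distance from `v₀` under `ℓ_x`. -/
noncomputable def zdist {V : Type*} (G : SimpleGraph V) (x : V → ℝ) (v0 v : V) : ℝ :=
  sInf {r : ℝ | ∃ p : G.Walk v0 v, walkLen x p = r}

/-- Feasibility for the local balloon-covering LP. -/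
def LPfeasible {V : Type*} (G : SimpleGraph V) (Bal : Set (Sym2 V) → Prop)
    (v0 : V) (x : V → ℝ) : Prop :=
  (∀ v, 0 ≤ x v) ∧ x v0 = 0 ∧
  ∀ (t : V) (P : G.Walk v0 t) (C : G.Walk t t),
    IsBalloon G Bal v0 t P C → 1 ≤ balloonWeight x P C

namespace SimpleGraph.Walk

variable {V : Type*} {G : SimpleGraph V} (x : V → ℝ)

@[simp]
lemma walkLen_nil {u : V} : walkLen x (nil : G.Walk u u) = 0 := rfl

@[simp]
lemma walkLen_cons {u v w : V} (h : G.Adj u v) (p : G.Walk v w) :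
    walkLen x (cons h p) = (x u + x v) / 2 + walkLen x p := by
  simp [walkLen]

lemma walkLen_append {u v w : V} (p : G.Walk u v) (q : G.Walk v w) :
    walkLen x (p.append q) = walkLen x p + walkLen x q := by
  simp [walkLen, darts_append]

lemma walkLen_rotate [DecidableEq V] {u v : V} (c : G.Walk v v) (h : u ∈ c.support) :
    walkLen x (c.rotate u h) = walkLen x c :=
  ((c.rotate_darts u h).perm.map _).sum_eq

lemma walkLen_eq_sum_support_sub {u v : V} (p : G.Walk u v) :
    walkLen x p = (p.support.map x).sum - x u / 2 - x v / 2 := by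
  induction p with
  | nil => simp only [walkLen_nil, support_nil, List.map_cons, List.map_nil, List.sum_cons,
      List.sum_nil, add_zero]; ring
  | cons h p ih =>
    simp only [walkLen_cons, ih, support_cons, List.map_cons, List.sum_cons]; ring

variable {x}

lemma walkLen_nonneg (hx : ∀ v, 0 ≤ x v) {u v : V} (p : G.Walk u v) : 0 ≤ walkLen x p :=
  List.sum_nonneg fun _ hr => by
    obtain ⟨d, -, rfl⟩ := List.mem_map.1 hr
    linarith [hx d.toProd.1, hx d.toProd.2]

lemma walkLen_dropUntil_le (hx : ∀ v, 0 ≤ x v) [DecidableEq V] {u v w : V} (p : G.Walk v w)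
    (h : u ∈ p.support) :
    walkLen x (p.dropUntil u h) ≤ walkLen x p := by
  conv_rhs => rw [← p.take_spec h, walkLen_append]
  linarith [walkLen_nonneg hx (p.takeUntil u h)]

lemma exists_isPath_inter_eq_end_walkLen_le (hx : ∀ v, 0 ≤ x v) [DecidableEq V] (S : Set V)
    {u v : V} (q : G.Walk u v) (hv : v ∈ S) :
    ∃ v' ∈ S, ∃ p : G.Walk u v', p.IsPath ∧ (∀ y ∈ p.support, y ∈ S → y = v') ∧
      walkLen x p ≤ walkLen x q := by
  induction q with
  | nil => exact ⟨_, hv, nil, .nil, by simp, le_rfl⟩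
  | @cons u w _ h q ih =>
    obtain ⟨v', hv'S, p, hp, hpS, hpq⟩ := ih hv
    have hstep : walkLen x q ≤ walkLen x (cons h q) := by
      rw [walkLen_cons]; linarith [hx u, hx w]
    by_cases huS : u ∈ S
    · exact ⟨u, huS, nil, .nil, by simp, walkLen_nonneg hx _⟩
    by_cases hup : u ∈ p.support
    · exact ⟨v', hv'S, p.dropUntil u hup, hp.dropUntil hup,
        fun y hy => hpS y (p.support_dropUntil_subset_support hup hy),
        (walkLen_dropUntil_le hx p hup).trans (hpq.trans hstep)⟩
    · refine ⟨v', hv'S, cons h p, hp.cons hup, ?_, ?_⟩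
      · intro y hy hyS
        obtain rfl | hy := List.mem_cons.1 (support_cons h p ▸ hy)
        · exact absurd hyS huS
        · exact hpS y hy hyS
      · rw [walkLen_cons, walkLen_cons]; linarith

end SimpleGraph.Walk

section Balloon

variable {V : Type*} {G : SimpleGraph V} {x : V → ℝ} {v0 : V}

lemma zdist_nonneg (hx : ∀ v, 0 ≤ x v) (v : V) : 0 ≤ zdist G x v0 v :=
  Real.sInf_nonneg <| by rintro _ ⟨p, rfl⟩; exact p.walkLen_nonneg hx

lemma zdist_le_walkLen (hx : ∀ v, 0 ≤ x v) {v : V} (p : G.Walk v0 v) :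
    zdist G x v0 v ≤ walkLen x p :=
  csInf_le ⟨0, by rintro _ ⟨q, rfl⟩; exact q.walkLen_nonneg hx⟩ ⟨p, rfl⟩

lemma le_zdist {v : V} (hv : G.Reachable v0 v) {r : ℝ}
    (h : ∀ p : G.Walk v0 v, r ≤ walkLen x p) :
    r ≤ zdist G x v0 v :=
  le_csInf (let ⟨p⟩ := hv; ⟨_, p, rfl⟩) <| by rintro _ ⟨p, rfl⟩; exact h p

lemma balloonWeight_eq_walkLen (hv0 : x v0 = 0) {t : V} (P : G.Walk v0 t)
    (C : G.Walk t t) :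
    balloonWeight x P C = 2 * walkLen x P + walkLen x C := by
  have hC : (C.support.map x).sum = x t + (C.support.tail.map x).sum := by
    rw [← C.cons_tail_support, List.map_cons, List.sum_cons, List.tail_cons]
  rw [balloonWeight, P.walkLen_eq_sum_support_sub, C.walkLen_eq_sum_support_sub, hC, hv0]
  ring

lemma isBalloon_rotate [DecidableEq V] {Bal : Set (Sym2 V) → Prop} {t v : V} {C : G.Walk t t}
    (hC : C.IsCycle) (hCBal : ¬ Bal {e | e ∈ C.edges}) (hv : v ∈ C.support)
    {P : G.Walk v0 v} (hP : P.IsPath) (hPC : ∀ y ∈ P.support, y ∈ C.support → y = v) :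
    IsBalloon G Bal v0 v P (C.rotate v hv) := by
  have hedges : {e | e ∈ (C.rotate v hv).edges} = {e | e ∈ C.edges} :=
    Set.ext fun _ => (C.rotate_edges v hv).perm.mem_iff
  exact ⟨hP, hC.rotate hv, hedges ▸ hCBal,
    fun y hy hyC => hPC y hy ((C.mem_support_rotate_iff v hv).1 hyC)⟩

lemma walkLen_le_zdist_of_isMinBalloon (hx : ∀ v, 0 ≤ x v) (hv0 : x v0 = 0)
    {Bal : Set (Sym2 V) → Prop} {t : V} {P : G.Walk v0 t} {C : G.Walk t t}
    (hC : C.IsCycle) (hCBal : ¬ Bal {e | e ∈ C.edges})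
    (hmin : ∀ (t' : V) (P' : G.Walk v0 t') (C' : G.Walk t' t'),
      IsBalloon G Bal v0 t' P' C' → balloonWeight x P C ≤ balloonWeight x P' C')
    {v : V} (hv : v ∈ C.support) :
    walkLen x P ≤ zdist G x v0 v := by
  classical
  refine le_zdist ⟨P.append (C.takeUntil v hv)⟩ fun q => ?_
  obtain ⟨v', hv', p, hp, hpC, hpq⟩ :=
    q.exists_isPath_inter_eq_end_walkLen_le hx {y | y ∈ C.support} hv
  have hw := hmin v' p _ (isBalloon_rotate hC hCBal hv' hp hpC)
  rw [balloonWeight_eq_walkLen hv0, balloonWeight_eq_walkLen hv0, Walk.walkLen_rotate] at hw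
  linarith

end Balloon

theorem stmt5_general {V : Type*} (G : SimpleGraph V) (Bal : Set (Sym2 V) → Prop)
    (v0 t : V) (x : V → ℝ)
    (hx0 : ∀ v, 0 ≤ x v) (hv0 : x v0 = 0)
    (P : G.Walk v0 t) (C : G.Walk t t) (hB : IsBalloon G Bal v0 t P C) :
    walkLen x C + 2 * sInf {r : ℝ | ∃ v ∈ C.support, zdist G x v0 v = r}
      ≤ balloonWeight x P C ∧
    ((∀ (t' : V) (P' : G.Walk v0 t') (C' : G.Walk t' t'),
        IsBalloon G Bal v0 t' P' C' → balloonWeight x P C ≤ balloonWeight x P' C') →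
      balloonWeight x P C
          = walkLen x C + 2 * sInf {r : ℝ | ∃ v ∈ C.support, zdist G x v0 v = r} ∧
      zdist G x v0 t = sInf {r : ℝ | ∃ v ∈ C.support, zdist G x v0 v = r} ∧
      walkLen x P = zdist G x v0 t) := by
  obtain ⟨-, hC, hCBal, -⟩ := hB
  set m := sInf {r : ℝ | ∃ v ∈ C.support, zdist G x v0 v = r}
  have hm : m ≤ zdist G x v0 t :=
    csInf_le ⟨0, by rintro _ ⟨v, -, rfl⟩; exact zdist_nonneg hx0 v⟩
      ⟨t, C.start_mem_support, rfl⟩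
  have hz : zdist G x v0 t ≤ walkLen x P := zdist_le_walkLen hx0 P
  have hw := balloonWeight_eq_walkLen hv0 P C
  refine ⟨by linarith, fun hmin => ?_⟩
  have hPm : walkLen x P ≤ m := le_csInf ⟨_, t, C.start_mem_support, rfl⟩ <| by
    rintro _ ⟨v, hv, rfl⟩
    exact walkLen_le_zdist_of_isMinBalloon hx0 hv0 hC hCBal hmin hv
  exact ⟨by linarith, by linarith, by linarith⟩

/-- decomposition 1: every balloon satisfies
`w(B) ≥ ℓ_x(C) + 2 · min_{v ∈ V(C)} z_x(v)`, with equality for a minimum-weight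
balloon; moreover the knot of a minimum-weight balloon minimises `z_x` over the
cycle and its attachment path is a shortest path. -/
theorem stmt5 {V : Type*} (G : SimpleGraph V) (Bal : Set (Sym2 V) → Prop)
    (v0 t : V) (x : V → ℝ)
    (hx0 : ∀ v, 0 ≤ x v) (hx1 : ∀ v, x v ≤ 1) (hv0 : x v0 = 0)
    (P : G.Walk v0 t) (C : G.Walk t t) (hB : IsBalloon G Bal v0 t P C) :
    walkLen x C + 2 * sInf {r : ℝ | ∃ v ∈ C.support, zdist G x v0 v = r}
      ≤ balloonWeight x P C ∧
    ((∀ (t' : V) (P' : G.Walk v0 t') (C' : G.Walk t' t'),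
        IsBalloon G Bal v0 t' P' C' → balloonWeight x P C ≤ balloonWeight x P' C') →
      balloonWeight x P C
          = walkLen x C + 2 * sInf {r : ℝ | ∃ v ∈ C.support, zdist G x v0 v = r} ∧
      zdist G x v0 t = sInf {r : ℝ | ∃ v ∈ C.support, zdist G x v0 v = r} ∧
      walkLen x P = zdist G x v0 t) :=
  stmt5_general G Bal v0 t x hx0 hv0 P C hB
end

section
/- Let G be the graph obtained from an apex construction: take any graph H = (V, E), add a new vertex v₀ adjacent to all vertices of V, and let the balanced class be B = ∅ (every cycle is unbalanced). Then for any X ⊆ V and k, the connected component of v₀ in G − X is balanced (acyclic) and |X| ≤ k if and only if X is a vertex cover of H of size at most k. In other words, the rooted cleaning problem on (G, ∅) with root v₀ is exactly Vertex Cover on H. -/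
/-! An edge `uv` of `H` with `u, v ∉ X` closes a triangle with the apex inside the component of
the apex in `G - X`. Conversely, a cycle cannot use the apex on each of its edges, so every cycle
of the apex graph contains an edge of `H`, which a vertex cover `X` meets. -/

open SimpleGraph

/-- The apex graph: add a vertex `none` adjacent to every vertex of `H`. -/
def apexGraph {V : Type*} (H : SimpleGraph V) : SimpleGraph (Option V) where
  Adj a b := a ≠ b ∧ ∀ u v : V, a = some u → b = some v → H.Adj u v
  symm := ⟨fun a b h => ⟨h.1.symm, fun u v hb ha => (h.2 v u ha hb).symm⟩⟩
  loopless := ⟨fun a h => h.1 rfl⟩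

namespace SimpleGraph

variable {W : Type*} {G : SimpleGraph W}

lemma Walk.isCycle_triangle {a b c : W} (hab : G.Adj a b) (hbc : G.Adj b c) (hca : G.Adj c a) :
    (Walk.cons hab (Walk.cons hbc (Walk.cons hca Walk.nil))).IsCycle := by
  rw [Walk.cons_isCycle_iff]
  simp [hab.ne.symm, hbc.ne, hca.ne, hca.ne.symm]

lemma Walk.IsCycle.exists_adj_ne {u : W} {w : G.Walk u u} (hw : w.IsCycle) (v : W) :
    ∃ x y, G.Adj x y ∧ x ∈ w.support ∧ y ∈ w.support ∧ x ≠ v ∧ y ≠ v := by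
  have hlen := hw.three_le_length
  suffices ∃ i < w.length, w.getVert i ≠ v ∧ w.getVert (i + 1) ≠ v by
    obtain ⟨i, hi, hx, hy⟩ := this
    exact ⟨_, _, w.adj_getVert_succ hi, w.getVert_mem_support i, w.getVert_mem_support (i + 1),
      hx, hy⟩
  -- the first edge, unless it meets `v`; then the second or the last edge avoids `v`
  by_cases hu : u = v
  · subst hu
    refine ⟨1, by omega, ?_, ?_⟩
    · rw [Ne, hw.getVert_endpoint_iff (by omega)]; omega
    · rw [Ne, hw.getVert_endpoint_iff (by omega)]; omega
  by_cases hsnd : w.snd = v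
  · refine ⟨w.length - 1, by omega, ?_, ?_⟩
    · exact hsnd ▸ (hw.snd_ne_penultimate).symm
    · rwa [Nat.sub_add_cancel (by omega), Walk.getVert_length]
  · exact ⟨0, by omega, by rwa [Walk.getVert_zero], hsnd⟩

end SimpleGraph

section apexGraph

variable {V : Type*} (H : SimpleGraph V)

lemma apexGraph_adj_none_some (u : V) : (apexGraph H).Adj none (some u) :=
  ⟨by simp, fun _ _ h _ => by cases h⟩

variable {H} in
lemma apexGraph_adj_some_some {u v : V} : (apexGraph H).Adj (some u) (some v) ↔ H.Adj u v :=
  ⟨fun h => h.2 u v rfl rfl, fun h => ⟨by simpa using h.ne, by rintro _ _ ⟨⟩ ⟨⟩; exact h⟩⟩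

lemma apexGraph_exists_walk_avoiding_iff {S : Set (Option V)} (hS : none ∉ S) (a : Option V) :
    (∃ p : (apexGraph H).Walk none a, ∀ y ∈ p.support, y ∉ S) ↔ a ∉ S := by
  refine ⟨fun ⟨p, hp⟩ => hp a p.end_mem_support, fun ha => ?_⟩
  cases a with
  | none => exact ⟨Walk.nil, by simpa using hS⟩
  | some u => exact ⟨Walk.cons (apexGraph_adj_none_some H u) Walk.nil, by simp [hS, ha]⟩

lemma apexGraph_exists_adj_of_isCycle {a : Option V} {w : (apexGraph H).Walk a a}
    (hw : w.IsCycle) : ∃ u v, H.Adj u v ∧ some u ∈ w.support ∧ some v ∈ w.support := by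
  obtain ⟨x, y, hxy, hx, hy, hxn, hyn⟩ := hw.exists_adj_ne none
  obtain ⟨u, rfl⟩ := Option.ne_none_iff_exists'.1 hxn
  obtain ⟨v, rfl⟩ := Option.ne_none_iff_exists'.1 hyn
  exact ⟨u, v, apexGraph_adj_some_some.1 hxy, hx, hy⟩

end apexGraph

theorem stmt14_general {V : Type*} (H : SimpleGraph V) (X : Set V) (k : ℕ)
    (comp : Set (Option V))
    (hcomp : comp = {a | ∃ p : (apexGraph H).Walk none a,
        ∀ y ∈ p.support, y ∉ (some '' X : Set (Option V))}) :
    ((∀ (a : Option V) (w : (apexGraph H).Walk a a), w.IsCycle →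
        ¬ ∀ y ∈ w.support, y ∈ comp) ∧ X.ncard ≤ k) ↔
    ((∀ u v : V, H.Adj u v → u ∈ X ∨ v ∈ X) ∧ X.ncard ≤ k) := by
  have hnone : (none : Option V) ∉ (some '' X : Set (Option V)) := by simp
  have hcomp' : ∀ a, a ∈ comp ↔ a ∉ (some '' X : Set (Option V)) := fun a => by
    rw [hcomp]; exact apexGraph_exists_walk_avoiding_iff H hnone a
  simp only [hcomp']
  refine and_congr_left fun _ => ⟨fun hacyclic u v huv => ?_, fun hcover a w hw hsupp => ?_⟩
  · by_contra! ⟨hu, hv⟩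
    refine hacyclic none _ (Walk.isCycle_triangle (apexGraph_adj_none_some H u)
      (apexGraph_adj_some_some.2 huv) (apexGraph_adj_none_some H v).symm) ?_
    intro y hy
    simp only [Walk.support_cons, Walk.support_nil, List.mem_cons, List.not_mem_nil,
      or_false] at hy
    rcases hy with rfl | rfl | rfl | rfl <;> simp [hu, hv]
  · obtain ⟨u, v, huv, hu, hv⟩ := apexGraph_exists_adj_of_isCycle H hw
    rcases hcover u v huv with h | h
    · exact hsupp _ hu ⟨u, h, rfl⟩
    · exact hsupp _ hv ⟨v, h, rfl⟩

/-- with `B = ∅`, the rooted cleaning problem on the apex graph,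
rooted at the apex, is exactly Vertex Cover on `H`. -/
theorem stmt14 {V : Type*} [Fintype V] (H : SimpleGraph V) (X : Set V) (k : ℕ)
    (comp : Set (Option V))
    (hcomp : comp = {a | ∃ p : (apexGraph H).Walk none a,
        ∀ y ∈ p.support, y ∉ (some '' X : Set (Option V))}) :
    ((∀ (a : Option V) (w : (apexGraph H).Walk a a), w.IsCycle →
        ¬ ∀ y ∈ w.support, y ∈ comp) ∧ X.ncard ≤ k) ↔
    ((∀ u v : V, H.Adj u v → u ∈ X ∨ v ∈ X) ∧ X.ncard ≤ k) :=
  stmt14_general H X k comp hcomp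
end

section
/- Let G = (V, E) be a graph, T ⊆ V a set of terminals, and construct G' by adding a new root v₀ adjacent to a set T' of new vertices, where each t ∈ T is duplicated into deg_G(t) copies in T', each copy attached to a distinct neighbour of t (replacing t). Declare a simple cycle of G' unbalanced iff it passes through v₀ and through two vertices of T' that are copies of distinct terminals of T. Then (a) the class of balanced cycles is linear, so this defines a biased graph; and (b) a set X ⊆ V(G') ∖ ({v₀} ∪ T') makes the component of v₀ in G' − X balanced iff X is a multiway cut in G separating every pair of distinct terminals of T. -/
open SimpleGraph

/-- Vertex type of the multiway-cut construction: non-terminal vertices of `G`,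
terminal copies (one copy of `t ∈ T` per neighbour of `t`), and a root `none`. -/
abbrev MCVert {V : Type*} (G : SimpleGraph V) (T : Set V) : Type _ :=
  Option ({v : V // v ∉ T} ⊕ {p : V × V // p.1 ∈ T ∧ G.Adj p.1 p.2})

/-- The multiway-cut construction: the root is adjacent to every terminal copy,
the copy `(t, u)` of a terminal `t` is attached to the neighbour `u` of `t`
(copies of two adjacent terminals are attached to each other), and non-terminal
adjacencies are inherited from `G`. -/
def mcGraph {V : Type*} (G : SimpleGraph V) (T : Set V) :
    SimpleGraph (MCVert G T) where
  Adj a b :=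
    match a, b with
    | none, none => False
    | none, some (Sum.inl _) => False
    | some (Sum.inl _), none => False
    | none, some (Sum.inr _) => True
    | some (Sum.inr _), none => True
    | some (Sum.inl u), some (Sum.inl v) => G.Adj u.1 v.1
    | some (Sum.inl u), some (Sum.inr c) => c.1.2 = u.1
    | some (Sum.inr c), some (Sum.inl u) => c.1.2 = u.1
    | some (Sum.inr c), some (Sum.inr c') => c.1.2 = c'.1.1 ∧ c'.1.2 = c.1.1
  symm := by
    refine ⟨fun a b h => ?_⟩
    rcases a with _ | (u | c) <;> rcases b with _ | (u' | c') <;>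
      simp_all [SimpleGraph.adj_comm] <;> tauto
  loopless := by
    refine ⟨fun a h => ?_⟩
    rcases a with _ | (u | c)
    · exact h
    · exact G.irrefl h
    · exact G.ne_of_adj c.2.2 h.1.symm

/-- A walk of the multiway-cut graph is balanced iff it does NOT pass through
the root together with two copies of distinct terminals. -/
def mcBal {V : Type*} {G : SimpleGraph V} {T : Set V} {a b : MCVert G T}
    (w : (mcGraph G T).Walk a b) : Prop :=
  ¬ ((none : MCVert G T) ∈ w.support ∧
      ∃ (c c' : {p : V × V // p.1 ∈ T ∧ G.Adj p.1 p.2}),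
        some (Sum.inr c) ∈ w.support ∧ some (Sum.inr c') ∈ w.support ∧
        c.1.1 ≠ c'.1.1)

/-!
A terminal copy is adjacent only to the root and to one further vertex, so every cycle through a
copy passes through the root. Hence a cycle is balanced iff all copies on it are copies of one
terminal, and linearity follows because "copy of the same terminal" is an equivalence relation:
if the first path of a theta carries a copy, the two balanced cycles force every copy onto its
terminal; otherwise the root is not on the first path, so at most one of the other two paths
carries copies (each such path must contain the root), and the copies of the third cycle all lie
on one of the balanced cycles.

For (b), deleting the root from an unbalanced cycle leaves a path that starts at a copy of some
terminal `t` and passes through a copy of a terminal `t' ≠ t`; its projection to `G` is a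
`t`–`t'` walk through vertices of the cycle, which a multiway cut must meet. Conversely, a walk
between distinct terminals avoiding `X` contains a path between distinct terminals with no
terminal inside, and this path lifts to an unbalanced cycle through the root.
-/

namespace SimpleGraph.Walk

variable {W : Type*} {H : SimpleGraph W}

theorem exists_isPath_interior_notMem (S : Set W) {t t' : W} (p : H.Walk t t') (ht : t ∈ S)
    (ht' : t' ∈ S) (hne : t ≠ t') :
    ∃ s ∈ S, ∃ s' ∈ S, s ≠ s' ∧ ∃ q : H.Walk s s', q.IsPath ∧ q.support ⊆ p.support ∧
      ∀ y ∈ q.support, y ≠ s → y ≠ s' → y ∉ S := by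
  classical
  induction hn : p.length using Nat.strong_induction_on generalizing t' with
  | _ n ih =>
  by_cases h : ∃ y ∈ p.support, y ≠ t ∧ y ≠ t' ∧ y ∈ S
  · obtain ⟨y, hy, hyt, hyt', hyS⟩ := h
    obtain ⟨s, hs, s', hs', hss', q, hq, hqp, hint⟩ :=
      ih _ (hn ▸ p.length_takeUntil_lt_length hy hyt') (p.takeUntil y hy) hyS hyt.symm rfl
    exact ⟨s, hs, s', hs', hss', q, hq,
      fun z hz => p.support_takeUntil_subset_support hy (hqp hz), hint⟩
  · push Not at h
    exact ⟨t, ht, t', ht', hne, p.bypass, p.bypass_isPath, p.support_bypass_subset_support,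
      fun y hy hyt hyt' hyS => h y (p.support_bypass_subset_support hy) hyt hyt' hyS⟩

end SimpleGraph.Walk

def IsMultiwayCut {V : Type*} (G : SimpleGraph V) (T X : Set V) : Prop :=
  ∀ t ∈ T, ∀ t' ∈ T, t ≠ t' → ∀ p : G.Walk t t', ∃ y ∈ p.support, y ∈ X

section MultiwayCutGraph

variable {V : Type*} {G : SimpleGraph V} {T : Set V}

abbrev MCCopy (G : SimpleGraph V) (T : Set V) := {p : V × V // p.1 ∈ T ∧ G.Adj p.1 p.2}

lemma mcGraph_adj_copy_inl {c : MCCopy G T} {u : {v : V // v ∉ T}} :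
    (mcGraph G T).Adj (some (.inr c)) (some (.inl u)) ↔ c.1.2 = u.1 := Iff.rfl

lemma mcGraph_adj_copy_copy {c c' : MCCopy G T} :
    (mcGraph G T).Adj (some (.inr c)) (some (.inr c')) ↔ c.1.2 = c'.1.1 ∧ c'.1.2 = c.1.1 :=
  Iff.rfl

lemma mcGraph_adj_root {z : MCVert G T} (h : (mcGraph G T).Adj none z) :
    ∃ c : MCCopy G T, z = some (.inr c) := by
  rcases z with _ | (u | c)
  exacts [h.elim, h.elim, ⟨c, rfl⟩]

lemma mcGraph_eq_of_adj_copy {c : MCCopy G T} {z z' : MCVert G T}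
    (h : (mcGraph G T).Adj (some (.inr c)) z) (h' : (mcGraph G T).Adj (some (.inr c)) z')
    (hz : z ≠ none) (hz' : z' ≠ none) : z = z' := by
  rcases z with _ | (u | d) <;> rcases z' with _ | (u' | d')
  all_goals first
    | exact absurd rfl hz | exact absurd rfl hz'
    | simp only [mcGraph_adj_copy_inl, mcGraph_adj_copy_copy] at h h'
  · exact congrArg (fun x => some (Sum.inl x)) (Subtype.ext (h.symm.trans h'))
  · exact absurd d'.2.1 (h'.1 ▸ h ▸ u.2)
  · exact absurd d.2.1 (h.1 ▸ h' ▸ u'.2)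
  · exact congrArg (fun x => some (Sum.inr x))
      (Subtype.ext (Prod.ext (h.1.symm.trans h'.1) (h.2.trans h'.2.symm)))

lemma root_mem_support_of_isCycle {a : MCVert G T} {w : (mcGraph G T).Walk a a}
    (hw : w.IsCycle) {c : MCCopy G T} (hc : some (.inr c) ∈ w.support) :
    none ∈ w.support := by
  classical
  have hw' := hw.rotate hc
  have hsnd := (w.rotate _ hc).getVert_mem_support 1
  have hpen := (w.rotate _ hc).getVert_mem_support ((w.rotate _ hc).length - 1)
  rw [Walk.mem_support_rotate_iff] at hsnd hpen
  by_contra hroot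
  exact hw'.snd_ne_penultimate <| mcGraph_eq_of_adj_copy (Walk.adj_snd hw'.not_nil)
    (Walk.adj_penultimate hw'.not_nil).symm (fun h => hroot (h ▸ hsnd))
    (fun h => hroot (h ▸ hpen))

lemma mcBal_iff_of_isCycle {a : MCVert G T} {w : (mcGraph G T).Walk a a} (hw : w.IsCycle) :
    mcBal w ↔ ∀ c c' : MCCopy G T, some (.inr c) ∈ w.support → some (.inr c') ∈ w.support →
      c.1.1 = c'.1.1 := by
  refine ⟨fun hbal c c' hc hc' => ?_, fun h ⟨_, c, c', hc, hc', hne⟩ => hne (h c c' hc hc')⟩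
  by_contra hne
  exact hbal ⟨root_mem_support_of_isCycle hw hc, c, c', hc, hc', hne⟩

lemma mcBal_of_isTheta {a b : MCVert G T} {p₁ p₂ p₃ : (mcGraph G T).Walk a b}
    (hθ : IsTheta (mcGraph G T) p₁ p₂ p₃) (hc₁₂ : (p₁.append p₂.reverse).IsCycle)
    (hc₁₃ : (p₁.append p₃.reverse).IsCycle) (hc₂₃ : (p₂.append p₃.reverse).IsCycle)
    (hb₁₂ : mcBal (p₁.append p₂.reverse)) (hb₁₃ : mcBal (p₁.append p₃.reverse)) :
    mcBal (p₂.append p₃.reverse) := by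
  obtain ⟨hab, -, -, -, -, -, h₂₃⟩ := hθ
  rw [mcBal_iff_of_isCycle hc₁₂] at hb₁₂
  rw [mcBal_iff_of_isCycle hc₁₃] at hb₁₃
  rw [mcBal_iff_of_isCycle hc₂₃]
  simp only [Walk.mem_support_append_iff, Walk.support_reverse, List.mem_reverse] at hb₁₂ hb₁₃ ⊢
  by_cases h₁ : ∃ c₀ : MCCopy G T, some (.inr c₀) ∈ p₁.support
  · obtain ⟨c₀, hc₀⟩ := h₁
    have key : ∀ c : MCCopy G T, some (.inr c) ∈ p₂.support ∨ some (.inr c) ∈ p₃.support →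
        c₀.1.1 = c.1.1 := by
      rintro c (hc | hc)
      exacts [hb₁₂ c₀ c (.inl hc₀) (.inr hc), hb₁₃ c₀ c (.inl hc₀) (.inr hc)]
    exact fun c c' hc hc' => (key c hc).symm.trans (key c' hc')
  push Not at h₁
  have hroot₁ : none ∉ p₁.support := fun h => by
    obtain ⟨y, hy, hadj⟩ := adj_of_mem_walk_support p₁ (Walk.not_nil_of_ne hab) h
    obtain ⟨c, rfl⟩ := mcGraph_adj_root hadj
    exact h₁ c hy
  have hroot : ∀ {q : (mcGraph G T).Walk a b}, (p₁.append q.reverse).IsCycle →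
      ∀ c : MCCopy G T, some (.inr c) ∈ q.support → none ∈ q.support := fun hc c hcq => by
    have := root_mem_support_of_isCycle hc (c := c) (by simp [hcq])
    simpa [hroot₁] using this
  by_cases h₃ : ∃ c : MCCopy G T, some (.inr c) ∈ p₃.support
  · obtain ⟨c₃, hc₃⟩ := h₃
    have h₂ : ∀ c : MCCopy G T, some (.inr c) ∉ p₂.support := fun c hc₂ => by
      rcases h₂₃ none (hroot hc₁₂ c hc₂) (hroot hc₁₃ c₃ hc₃) with rfl | rfl
      exacts [hroot₁ p₁.start_mem_support, hroot₁ p₁.end_mem_support]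
    intro c c' hc hc'
    exact hb₁₃ c c' (.inr (hc.resolve_left (h₂ c))) (.inr (hc'.resolve_left (h₂ c')))
  · push Not at h₃
    intro c c' hc hc'
    exact hb₁₂ c c' (.inr (hc.resolve_right (h₃ c))) (.inr (hc'.resolve_right (h₃ c')))

def mcProj : (mcGraph G T).induce {none}ᶜ →g G where
  toFun
    | ⟨some (.inl u), _⟩ => u.1
    | ⟨some (.inr c), _⟩ => c.1.1
    | ⟨none, h⟩ => (h rfl).elim
  map_rel' := by
    rintro ⟨_ | (u | c), hx⟩ ⟨_ | (u' | c'), hy⟩ h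
    all_goals first | exact (hx rfl).elim | exact (hy rfl).elim | skip
    · exact h
    · exact show G.Adj u.1 c'.1.1 from (mcGraph_adj_copy_inl.mp h.symm ▸ c'.2.2).symm
    · exact show G.Adj c.1.1 u'.1 from mcGraph_adj_copy_inl.mp h ▸ c.2.2
    · exact show G.Adj c.1.1 c'.1.1 from (mcGraph_adj_copy_copy.mp h).1 ▸ c.2.2

lemma mcBal_of_isMultiwayCut {X : Set V} (hXT : X ∩ T = ∅) (hcut : IsMultiwayCut G T X)
    {a : MCVert G T} {w : (mcGraph G T).Walk a a} (hw : w.IsCycle)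
    (hwX : ∀ u : {v : V // v ∉ T}, some (.inl u) ∈ w.support → u.1 ∉ X) : mcBal w := by
  classical
  rintro ⟨hroot, c, c', hc, hc', hne⟩
  obtain ⟨x, hx, r, hr⟩ := Walk.not_nil_iff.mp (hw.rotate hroot).not_nil
  have hrot : ∀ z, z ∈ w.support ↔ z = none ∨ z ∈ r.support := fun z => by
    rw [← Walk.mem_support_rotate_iff w none hroot, hr, Walk.support_cons, List.mem_cons]
  have hr_path : r.IsPath := ((Walk.cons_isCycle_iff r hx).mp (hr ▸ hw.rotate hroot)).1
  obtain ⟨e, rfl⟩ := mcGraph_adj_root hx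
  obtain ⟨d, hd, hed⟩ : ∃ d : MCCopy G T, some (.inr d) ∈ w.support ∧ e.1.1 ≠ d.1.1 := by
    by_cases h : e.1.1 = c.1.1
    exacts [⟨c', hc', h ▸ hne⟩, ⟨c, hc, h⟩]
  have hdr : some (.inr d) ∈ r.support := ((hrot _).mp hd).resolve_left (by simp)
  obtain ⟨seg, hseg_r, hseg⟩ : ∃ seg : (mcGraph G T).Walk (some (.inr e)) (some (.inr d)),
      seg.support ⊆ r.support ∧ ∀ z ∈ seg.support, z ∈ ({none}ᶜ : Set (MCVert G T)) :=
    ⟨r.takeUntil _ hdr, Walk.support_takeUntil_subset_support r hdr, fun z hz hz0 =>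
      Walk.endpoint_notMem_support_takeUntil hr_path hdr (by simp) (hz0 ▸ hz)⟩
  obtain ⟨y, hy, hyX⟩ := hcut (mcProj ⟨_, hseg _ seg.start_mem_support⟩) e.2.1
    (mcProj ⟨_, hseg _ seg.end_mem_support⟩) d.2.1 hed ((seg.induce _ hseg).map mcProj)
  simp only [Walk.support_map, Walk.support_induce, List.mem_map, List.mem_attachWith] at hy
  obtain ⟨⟨z, hz0⟩, hz, rfl⟩ := hy
  have hzw : z ∈ w.support := (hrot z).mpr (.inr (hseg_r hz))
  rcases z with _ | (u | c'')
  · exact hz0 rfl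
  · exact hwX u hzw hyX
  · exact Set.eq_empty_iff_forall_notMem.mp hXT _ ⟨hyX, c''.2.1⟩

def mcInl : G.induce Tᶜ ↪g mcGraph G T where
  toFun u := some (.inl u)
  inj' _ _ h := by simpa using h
  map_rel_iff' := Iff.rfl

lemma exists_cycle_not_mcBal_of_adj {s s' : V} (hs : s ∈ T) (hs' : s' ∈ T) (hss' : s ≠ s')
    (h : G.Adj s s') :
    ∃ w : (mcGraph G T).Walk none none, w.IsCycle ∧ ¬mcBal w ∧
      ∀ u : {v : V // v ∉ T}, some (.inl u) ∉ w.support := by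
  let c : MCCopy G T := ⟨(s, s'), hs, h⟩
  let c' : MCCopy G T := ⟨(s', s), hs', h.symm⟩
  have hcc' : c ≠ c' := fun h => hss' (congrArg (·.1.1) h)
  have e₁ : (mcGraph G T).Adj none (some (.inr c)) := trivial
  have e₂ : (mcGraph G T).Adj (some (.inr c)) (some (.inr c')) := ⟨rfl, rfl⟩
  have e₃ : (mcGraph G T).Adj (some (.inr c')) none := trivial
  refine ⟨.cons e₁ <| .cons e₂ <| .cons e₃ .nil, ?_, ?_, ?_⟩
  · rw [Walk.isCycle_iff_isPath_tail_and_le_length]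
    simp [Walk.isPath_def, hcc']
  · exact fun hbal => hbal ⟨by simp, c, c', by simp, by simp, hss'⟩
  · simp

lemma exists_isPath_mcGraph_of_notMem {v₁ v₂ : V} {m : G.Walk v₁ v₂} (hm : m.IsPath)
    (hmT : ∀ y ∈ m.support, y ∈ Tᶜ) :
    ∃ p : (mcGraph G T).Walk (some (.inl ⟨v₁, hmT _ m.start_mem_support⟩))
      (some (.inl ⟨v₂, hmT _ m.end_mem_support⟩)), p.IsPath ∧ none ∉ p.support ∧
      (∀ c : MCCopy G T, some (.inr c) ∉ p.support) ∧
      ∀ u : {v : V // v ∉ T}, some (.inl u) ∈ p.support → u.1 ∈ m.support := by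
  have hind : (m.induce _ hmT).IsPath := .of_map (f := (Embedding.induce _).toHom) <| by
    rwa [Walk.map_induce]
  have hsupp : ∀ z ∈ ((m.induce _ hmT).map mcInl.toHom).support,
      ∃ u : {v : V // v ∉ T}, u.1 ∈ m.support ∧ z = some (.inl u) := by
    rw [Walk.support_map]
    simp only [Walk.support_induce, List.mem_map]
    rintro _ ⟨⟨y, hy⟩, hy', rfl⟩
    exact ⟨⟨y, hy⟩, by simpa using hy', rfl⟩
  refine ⟨(m.induce _ hmT).map mcInl.toHom, hind.map mcInl.injective, fun h => ?_,
    fun c h => ?_, fun u h => ?_⟩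
  · obtain ⟨u, -, ⟨⟩⟩ := hsupp _ h
  · obtain ⟨u, -, ⟨⟩⟩ := hsupp _ h
  · obtain ⟨u', hu', ⟨⟩⟩ := hsupp _ h
    exact hu'

lemma exists_cycle_not_mcBal_of_interior {s s' v₁ v₂ : V} (hs : s ∈ T) (hs' : s' ∈ T)
    (hss' : s ≠ s') (h₁ : G.Adj s v₁) (h₂ : G.Adj v₂ s') {m : G.Walk v₁ v₂} (hm : m.IsPath)
    (hmT : ∀ y ∈ m.support, y ∈ Tᶜ) :
    ∃ w : (mcGraph G T).Walk none none, w.IsCycle ∧ ¬mcBal w ∧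
      ∀ u : {v : V // v ∉ T}, some (.inl u) ∈ w.support → u.1 ∈ m.support := by
  let c₁ : MCCopy G T := ⟨(s, v₁), hs, h₁⟩
  let c₂ : MCCopy G T := ⟨(s', v₂), hs', h₂.symm⟩
  have hc₁₂ : c₁ ≠ c₂ := fun h => hss' (congrArg (·.1.1) h)
  obtain ⟨p, hp, hp_root, hp_copy, hp_inl⟩ := exists_isPath_mcGraph_of_notMem hm hmT
  have e₁ : (mcGraph G T).Adj none (some (.inr c₁)) := trivial
  have e₂ : (mcGraph G T).Adj (some (.inr c₁)) (some (.inl ⟨v₁, hmT _ m.start_mem_support⟩)) :=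
    rfl
  have e₃ : (mcGraph G T).Adj (some (.inl ⟨v₂, hmT _ m.end_mem_support⟩)) (some (.inr c₂)) := rfl
  have e₄ : (mcGraph G T).Adj (some (.inr c₂)) none := trivial
  have hP : (((p.cons e₂).concat e₃).concat e₄).IsPath :=
    ((hp.cons (hp_copy c₁)).concat (by simp [hp_copy, hc₁₂.symm]) e₃).concat
      (by simp [Walk.support_concat, hp_root]) e₄
  refine ⟨.cons e₁ (((p.cons e₂).concat e₃).concat e₄), ?_, ?_, ?_⟩
  · rw [Walk.isCycle_iff_isPath_tail_and_le_length]
    simpa using hP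
  · exact fun hbal => hbal ⟨by simp, c₁, c₂, by simp, by simp [Walk.support_concat], hss'⟩
  · simpa [Walk.support_concat] using hp_inl

lemma exists_cycle_not_mcBal {s s' : V} (hs : s ∈ T) (hs' : s' ∈ T) (hss' : s ≠ s')
    {q : G.Walk s s'} (hq : q.IsPath) (hint : ∀ y ∈ q.support, y ≠ s → y ≠ s' → y ∉ T) :
    ∃ w : (mcGraph G T).Walk none none, w.IsCycle ∧ ¬mcBal w ∧
      ∀ u : {v : V // v ∉ T}, some (.inl u) ∈ w.support → u.1 ∈ q.support := by
  obtain ⟨v₁, h₁, r, rfl⟩ := Walk.exists_eq_cons_of_ne hss' q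
  by_cases hv₁ : v₁ = s'
  · subst hv₁
    obtain ⟨w, hw, hbal, hinl⟩ := exists_cycle_not_mcBal_of_adj hs hs' hss' h₁
    exact ⟨w, hw, hbal, fun u hu => (hinl u hu).elim⟩
  obtain ⟨_, h, r', rfl⟩ := Walk.exists_eq_cons_of_ne hv₁ r
  obtain ⟨v₂, m, h₂, hr'⟩ := Walk.exists_cons_eq_concat h r'
  rw [hr'] at hq hint ⊢
  have hmq : ∀ y ∈ m.support, y ∈ (Walk.cons h₁ (m.concat h₂)).support := fun y hy => by
    simp [hy]
  obtain ⟨hmc, hs_m⟩ := (Walk.cons_isPath_iff _ _).mp hq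
  obtain ⟨hm, hs'_m⟩ := (Walk.concat_isPath_iff _).mp hmc
  have hmT : ∀ y ∈ m.support, y ∈ Tᶜ := fun y hy => hint y (hmq y hy)
    (by rintro rfl; exact hs_m (by simp [hy])) (by rintro rfl; exact hs'_m hy)
  obtain ⟨w, hw, hbal, hinl⟩ := exists_cycle_not_mcBal_of_interior hs hs' hss' h₁ h₂ hm hmT
  exact ⟨w, hw, hbal, fun u hu => hmq _ (hinl u hu)⟩

lemma isMultiwayCut_of_forall_mcBal {X : Set V}
    (h : ∀ w : (mcGraph G T).Walk none none, w.IsCycle →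
      (∀ u : {v : V // v ∉ T}, some (.inl u) ∈ w.support → u.1 ∉ X) → mcBal w) :
    IsMultiwayCut G T X := by
  intro t ht t' ht' htt' p
  by_contra! hp
  obtain ⟨s, hs, s', hs', hss', q, hq, hqp, hint⟩ :=
    p.exists_isPath_interior_notMem T ht ht' htt'
  obtain ⟨w, hw, hbal, hinl⟩ := exists_cycle_not_mcBal hs hs' hss' hq hint
  exact hbal (h w hw fun u hu => hp _ (hqp (hinl u hu)))

end MultiwayCutGraph

/-- (a) the balanced cycles of the multiway-cut construction form
a linear class; (b) deleting `X` (a set of non-terminal vertices) makes the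
component of the root balanced iff `X` is a multiway cut for `(G, T)`. -/
theorem stmt15 {V : Type*} (G : SimpleGraph V) (T : Set V) :
    -- (a) linearity
    (∀ (a b : MCVert G T) (p1 p2 p3 : (mcGraph G T).Walk a b),
      IsTheta (mcGraph G T) p1 p2 p3 →
      (p1.append p2.reverse).IsCycle →
      (p1.append p3.reverse).IsCycle →
      (p2.append p3.reverse).IsCycle →
      mcBal (p1.append p2.reverse) → mcBal (p1.append p3.reverse) →
      mcBal (p2.append p3.reverse)) ∧
    -- (b) correspondence with multiway cut
    (∀ X : Set V, X ∩ T = ∅ →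
      ((∀ (a : MCVert G T) (w : (mcGraph G T).Walk a a), w.IsCycle →
          (∀ y ∈ w.support,
            (∃ p : (mcGraph G T).Walk none y, ∀ z ∈ p.support,
              ∀ u : {v : V // v ∉ T}, z = some (Sum.inl u) → u.1 ∉ X) ∧
            (∀ u : {v : V // v ∉ T}, y = some (Sum.inl u) → u.1 ∉ X)) →
          mcBal w) ↔
        (∀ t ∈ T, ∀ t' ∈ T, t ≠ t' → ∀ p : G.Walk t t',
          ∃ y ∈ p.support, y ∈ X))) := by
  classical
  refine ⟨fun _ _ _ _ _ => mcBal_of_isTheta, fun X hXT =>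
    ⟨fun hbal => ?_, fun hcut _ w hw hwX => ?_⟩⟩
  · refine isMultiwayCut_of_forall_mcBal fun w hw hwX => hbal none w hw fun y hy =>
      ⟨⟨w.takeUntil y hy, fun z hz u hzu =>
        hwX u (hzu ▸ w.support_takeUntil_subset_support hy hz)⟩, fun u hyu => hwX u (hyu ▸ hy)⟩
  · exact mcBal_of_isMultiwayCut hXT hcut hw fun u hu => (hwX _ hu).2 u rfl
end
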